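/- arXiv:2409.09137 — 2 statements merged into one kernel-verified Lean document; each statement's English description precedes it below -/
import Mathlib

section
/- Let C ∈ ℝ^{d×d} and Γ ∈ ℝ^{q×q} be symmetric positive definite, F ∈ ℝ^{q×d}, and set H := FᵀΓ⁻¹F, H̃ := C^{1/2} H C^{1/2}, C_post := (C⁻¹ + H)⁻¹, and K := C_post FᵀΓ⁻¹. Then trace(Kᵀ C⁻¹ K (F C Fᵀ + Γ)) = trace(H̃ (I + H̃)⁻¹). -/
open Matrix

/-!
The gain satisfies `K (F C Fᵀ + Γ) = C Fᵀ`, since `C_post (C⁻¹ + Fᵀ Γ⁻¹ F) = 1`. Hence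
`Kᵀ C⁻¹ K (F C Fᵀ + Γ) = (F K)ᵀ`, whose trace is `trace (C_post H)`. Writing
`C⁻¹ + H = S⁻¹ (1 + H̃) S⁻¹` gives `C_post = S (1 + H̃)⁻¹ S`, and cycling the trace turns
`trace (C_post H)` into `trace (H̃ (1 + H̃)⁻¹)`.
-/

namespace Matrix

variable {m n R : Type*} [Fintype m] [Fintype n] [DecidableEq m] [CommRing R]

theorem mul_transpose_mul_inv_mul_mul_transpose_add [DecidableEq n] {C P : Matrix m m R}
    {Γ : Matrix n n R} {F : Matrix n m R} (hC : IsUnit C.det) (hΓ : IsUnit Γ.det)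
    (hP : P * (C⁻¹ + Fᵀ * Γ⁻¹ * F) = 1) :
    P * Fᵀ * Γ⁻¹ * (F * C * Fᵀ + Γ) = C * Fᵀ :=
  calc P * Fᵀ * Γ⁻¹ * (F * C * Fᵀ + Γ)
      = P * (Fᵀ * Γ⁻¹ * F * (C * Fᵀ) + Fᵀ * (Γ⁻¹ * Γ)) := by
        simp only [Matrix.mul_add, Matrix.mul_assoc]
    _ = P * (Fᵀ * Γ⁻¹ * F * (C * Fᵀ) + C⁻¹ * C * Fᵀ) := by
        rw [nonsing_inv_mul _ hΓ, nonsing_inv_mul _ hC, Matrix.mul_one, Matrix.one_mul]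
    _ = P * (C⁻¹ + Fᵀ * Γ⁻¹ * F) * (C * Fᵀ) := by
        simp only [Matrix.add_mul, Matrix.mul_add, Matrix.mul_assoc, add_comm]
    _ = C * Fᵀ := by rw [hP, Matrix.one_mul]

theorem trace_transpose_mul_inv_mul_mul {C : Matrix m m R} {K : Matrix m n R}
    {F : Matrix n m R} {M : Matrix n n R} (hC : IsUnit C.det) (hKM : K * M = C * Fᵀ) :
    (Kᵀ * C⁻¹ * K * M).trace = (K * F).trace :=
  calc (Kᵀ * C⁻¹ * K * M).trace = (Kᵀ * (C⁻¹ * C) * Fᵀ).trace := by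
        simp only [Matrix.mul_assoc, hKM]
    _ = (K * F).trace := by
        rw [nonsing_inv_mul _ hC, Matrix.mul_one, ← transpose_mul, trace_transpose,
          trace_mul_comm]

theorem inv_mul_inv_add_eq {S H : Matrix m m R} (hS : IsUnit S.det) :
    (S⁻¹ * S⁻¹ + H)⁻¹ = S * (1 + S * H * S)⁻¹ * S := by
  have hfactor : S⁻¹ * (1 + S * H * S) * S⁻¹ = S⁻¹ * S⁻¹ + (S⁻¹ * S) * H * (S * S⁻¹) := by
    noncomm_ring
  rw [nonsing_inv_mul _ hS, mul_nonsing_inv _ hS, Matrix.one_mul, Matrix.mul_one] at hfactor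
  rw [← hfactor, Matrix.mul_inv_rev, Matrix.mul_inv_rev, nonsing_inv_nonsing_inv _ hS]
  simp only [Matrix.mul_assoc]

end Matrix

/-- For a linear Gaussian inverse problem with prior covariance `C`, noise
covariance `Γ` and forward map `F`, setting `H = Fᵀ Γ⁻¹ F`,
`H̃ = C^{1/2} H C^{1/2}` (with `S = C^{1/2}` the symmetric positive definite
square root of `C`), `C_post = (C⁻¹ + H)⁻¹` and `K = C_post Fᵀ Γ⁻¹`, one has
`trace (Kᵀ C⁻¹ K (F C Fᵀ + Γ)) = trace (H̃ (I + H̃)⁻¹)`. -/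
theorem stmt_4 (d q : ℕ) (C : Matrix (Fin d) (Fin d) ℝ)
    (Γ : Matrix (Fin q) (Fin q) ℝ) (hC : C.PosDef) (hΓ : Γ.PosDef)
    (F : Matrix (Fin q) (Fin d) ℝ)
    (H : Matrix (Fin d) (Fin d) ℝ) (hH : H = Fᵀ * Γ⁻¹ * F)
    (Cpost : Matrix (Fin d) (Fin d) ℝ) (hCpost : Cpost = (C⁻¹ + H)⁻¹)
    (K : Matrix (Fin d) (Fin q) ℝ) (hK : K = Cpost * Fᵀ * Γ⁻¹) :
    ∀ S : Matrix (Fin d) (Fin d) ℝ, S.PosDef → S * S = C →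
      (Kᵀ * C⁻¹ * K * (F * C * Fᵀ + Γ)).trace
        = ((S * H * S) * (1 + S * H * S)⁻¹).trace := by
  intro S hS hSC
  have hCu := (isUnit_iff_isUnit_det C).mp hC.isUnit
  have hΓu := (isUnit_iff_isUnit_det Γ).mp hΓ.isUnit
  have hSu := (isUnit_iff_isUnit_det S).mp hS.isUnit
  have hH_psd : H.PosSemidef := by
    simpa only [hH, conjTranspose_eq_transpose_of_trivial] using
      hΓ.inv.posSemidef.conjTranspose_mul_mul_same F
  have hpost : Cpost * (C⁻¹ + H) = 1 := by
    rw [hCpost]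
    exact nonsing_inv_mul _ ((isUnit_iff_isUnit_det _).mp (hC.inv.add_posSemidef hH_psd).isUnit)
  calc (Kᵀ * C⁻¹ * K * (F * C * Fᵀ + Γ)).trace
      = (K * F).trace := by
        refine trace_transpose_mul_inv_mul_mul hCu ?_
        rw [hK]
        exact mul_transpose_mul_inv_mul_mul_transpose_add hCu hΓu (hH ▸ hpost)
    _ = ((S * (1 + S * H * S)⁻¹) * (S * H)).trace := by
        have hKF : K * F = Cpost * H := by rw [hK, hH]; simp only [Matrix.mul_assoc]
        rw [hKF, hCpost, ← hSC, Matrix.mul_inv_rev, inv_mul_inv_add_eq hSu]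
        simp only [Matrix.mul_assoc]
    _ = ((S * H * S) * (1 + S * H * S)⁻¹).trace := by
        rw [trace_mul_comm]
        simp only [Matrix.mul_assoc]
end

section
/- Let N be a positive integer, 1 ≤ k ≤ N, and fix a binary vector ξ ∈ {0,1}^N with Σᵢ ξᵢ = k and an index j. For p ∈ (0,1)^N define wᵢ = pᵢ/(1 − pᵢ), e_k(w) the k-th elementary symmetric polynomial, log P(ξ | p, k) = Σᵢ ξᵢ log wᵢ − log e_k(w), and πⱼ = wⱼ e_{k−1}(w_{−j}) / e_k(w). Then the partial derivative of p ↦ log P(ξ | p, k) with respect to pⱼ exists and equals (ξⱼ − πⱼ)(1 + wⱼ)² / wⱼ. -/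
open Finset

/-- The weights `wᵢ = pᵢ/(1 − pᵢ)` of the conditional Bernoulli model. -/
noncomputable def cbWeight {N : ℕ} (p : Fin N → ℝ) (i : Fin N) : ℝ :=
  p i / (1 - p i)

/-- `e_k(w(p))`: the `k`-th elementary symmetric polynomial of the weights. -/
noncomputable def cbEsymm {N : ℕ} (k : ℕ) (p : Fin N → ℝ) : ℝ :=
  ∑ S ∈ (univ : Finset (Fin N)).powersetCard k, ∏ i ∈ S, cbWeight p i

/-- `e_{k−1}(w(p)_{−j})`: the `(k−1)`-th elementary symmetric polynomial of the
weights with the `j`-th entry omitted. -/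
noncomputable def cbEsymmErase {N : ℕ} (k : ℕ) (j : Fin N) (p : Fin N → ℝ) : ℝ :=
  ∑ S ∈ ((univ : Finset (Fin N)).erase j).powersetCard (k - 1),
    ∏ i ∈ S, cbWeight p i

/-- `log P(ξ | p, k) = Σᵢ ξᵢ log wᵢ − log e_k(w)`. -/
noncomputable def cbLogPMF {N : ℕ} (k : ℕ) (ξ : Fin N → Fin 2)
    (p : Fin N → ℝ) : ℝ :=
  (∑ i, (ξ i : ℕ) * Real.log (cbWeight p i)) - Real.log (cbEsymm k p)

/-- `πⱼ = wⱼ e_{k−1}(w_{−j}) / e_k(w)`: first-order inclusion probability. -/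
noncomputable def cbInclusion {N : ℕ} (k : ℕ) (j : Fin N) (p : Fin N → ℝ) : ℝ :=
  cbWeight p j * cbEsymmErase k j p / cbEsymm k p

/-! The elementary symmetric sum is affine in a single weight,
`e_k(w) = e_k(w_{−j}) + w_j e_{k−1}(w_{−j})`, so the derivative of
`log P = Σ ξᵢ log wᵢ − log e_k(w)` in `w_j` is `ξ_j / w_j − e_{k−1}(w_{−j}) / e_k(w) = (ξ_j − π_j) / w_j`.
The chain rule with `dw_j / dp_j = 1 / (1 − p_j)² = (1 + w_j)²` gives the claim. -/

theorem Finset.sum_prod_powersetCard_succ_insert {ι R : Type*} [DecidableEq ι] [CommSemiring R]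
    {s : Finset ι} {a : ι} (ha : a ∉ s) (n : ℕ) (f : ι → R) :
    ∑ S ∈ (insert a s).powersetCard (n + 1), ∏ i ∈ S, f i =
      ∑ S ∈ s.powersetCard (n + 1), ∏ i ∈ S, f i + f a * ∑ S ∈ s.powersetCard n, ∏ i ∈ S, f i := by
  have hnotMem {S : Finset ι} (hS : S ∈ s.powersetCard n) : a ∉ S :=
    fun h => ha ((mem_powersetCard.mp hS).1 h)
  rw [powersetCard_succ_insert ha, sum_union, sum_image, mul_sum]
  · exact congrArg _ (sum_congr rfl fun S hS => prod_insert (hnotMem hS))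
  · intro S hS T hT hST
    rw [← erase_insert (hnotMem hS), hST, erase_insert (hnotMem hT)]
  · refine disjoint_left.mpr fun S hS hS' => ?_
    obtain ⟨T, -, rfl⟩ := mem_image.mp hS'
    exact ha ((mem_powersetCard.mp hS).1 (mem_insert_self a T))

theorem hasDerivAt_div_one_sub {x : ℝ} (hx : x ≠ 1) :
    HasDerivAt (fun t => t / (1 - t)) ((1 + x / (1 - x)) ^ 2) x := by
  have hx' : 1 - x ≠ 0 := sub_ne_zero.mpr hx.symm
  refine ((hasDerivAt_id' x).div ((hasDerivAt_id' x).const_sub 1) hx').congr_deriv ?_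
  field_simp
  ring

section ConditionalBernoulli

variable {N : ℕ} {k : ℕ} {j : Fin N} {p : Fin N → ℝ}

theorem cbWeight_pos {i : Fin N} (hp : p i ∈ Set.Ioo (0 : ℝ) 1) : 0 < cbWeight p i :=
  div_pos hp.1 (sub_pos.mpr hp.2)

@[simp]
theorem cbWeight_update_self (t : ℝ) : cbWeight (Function.update p j t) j = t / (1 - t) := by
  simp [cbWeight]

@[simp]
theorem cbWeight_update_of_ne {i : Fin N} (h : i ≠ j) (t : ℝ) :
    cbWeight (Function.update p j t) i = cbWeight p i := by
  simp [cbWeight, h]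

theorem sum_powersetCard_erase_prod_cbWeight_update (m : ℕ) (t : ℝ) :
    ∑ S ∈ (univ.erase j).powersetCard m, ∏ i ∈ S, cbWeight (Function.update p j t) i =
      ∑ S ∈ (univ.erase j).powersetCard m, ∏ i ∈ S, cbWeight p i :=
  sum_congr rfl fun _ hS => prod_congr rfl fun _ hi =>
    cbWeight_update_of_ne (ne_of_mem_erase ((mem_powersetCard.mp hS).1 hi)) t

theorem cbEsymm_pos (hk : k ≤ N) (hw : ∀ i, 0 < cbWeight p i) : 0 < cbEsymm k p :=
  sum_pos (fun S _ => prod_pos fun i _ => hw i) (powersetCard_nonempty.mpr (by simpa using hk))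

theorem cbEsymm_eq_add_mul (hk : 1 ≤ k) (j : Fin N) (p : Fin N → ℝ) :
    cbEsymm k p = ∑ S ∈ (univ.erase j).powersetCard k, ∏ i ∈ S, cbWeight p i
      + cbWeight p j * cbEsymmErase k j p := by
  obtain ⟨n, rfl⟩ := Nat.exists_eq_add_of_le' hk
  rw [cbEsymm, cbEsymmErase, Nat.add_sub_cancel]
  conv_lhs => rw [← insert_erase (mem_univ j)]
  exact sum_prod_powersetCard_succ_insert (notMem_erase j _) n _

theorem cbEsymm_update (hk : 1 ≤ k) (t : ℝ) :
    cbEsymm k (Function.update p j t) =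
      cbEsymm k p + (t / (1 - t) - cbWeight p j) * cbEsymmErase k j p := by
  rw [cbEsymm_eq_add_mul hk j, cbEsymm_eq_add_mul hk j p, cbWeight_update_self]
  simp only [cbEsymmErase, sum_powersetCard_erase_prod_cbWeight_update]
  ring

theorem hasDerivAt_cbEsymm_update (hk : 1 ≤ k) (hp : p j ≠ 1) :
    HasDerivAt (fun t => cbEsymm k (Function.update p j t))
      ((1 + cbWeight p j) ^ 2 * cbEsymmErase k j p) (p j) := by
  simp only [cbEsymm_update hk]
  exact (((hasDerivAt_div_one_sub hp).sub_const _).mul_const _).const_add _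

theorem hasDerivAt_sum_mul_log_cbWeight_update (c : Fin N → ℝ) (hp : p j ∈ Set.Ioo (0 : ℝ) 1) :
    HasDerivAt (fun t => ∑ i, c i * Real.log (cbWeight (Function.update p j t) i))
      (c j * ((1 + cbWeight p j) ^ 2 / cbWeight p j)) (p j) := by
  have hterm : ∀ i, HasDerivAt (fun t => c i * Real.log (cbWeight (Function.update p j t) i))
      (if i = j then c j * ((1 + cbWeight p j) ^ 2 / cbWeight p j) else 0) (p j) := by
    intro i
    by_cases h : i = j
    · subst h
      simp only [cbWeight_update_self, if_true]
      exact ((hasDerivAt_div_one_sub hp.2.ne).log (cbWeight_pos hp).ne').const_mul _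
    · simp only [cbWeight_update_of_ne h, if_neg h]
      exact hasDerivAt_const _ _
  simpa using HasDerivAt.fun_sum (u := univ) fun i _ => hterm i

end ConditionalBernoulli

theorem stmt_11_general (N : ℕ) (k : ℕ) (hk1 : 1 ≤ k) (hkN : k ≤ N)
    (ξ : Fin N → Fin 2) (j : Fin N)
    (p : Fin N → ℝ) (hp : ∀ i, p i ∈ Set.Ioo (0 : ℝ) 1) :
    HasDerivAt (fun t : ℝ => cbLogPMF k ξ (Function.update p j t))
      (((ξ j : ℕ) - cbInclusion k j p)
        * (1 + cbWeight p j) ^ 2 / cbWeight p j)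
      (p j) := by
  have hw : ∀ i, 0 < cbWeight p i := fun i => cbWeight_pos (hp i)
  have hE : 0 < cbEsymm k p := cbEsymm_pos hkN hw
  have hlog := (hasDerivAt_sum_mul_log_cbWeight_update (fun i => ((ξ i : ℕ) : ℝ)) (hp j)).fun_sub
    ((hasDerivAt_cbEsymm_update hk1 (hp j).2.ne).log (by simpa using hE.ne'))
  refine hlog.congr_deriv ?_
  rw [Function.update_eq_self, cbInclusion]
  field_simp [(hw j).ne', hE.ne']

/-- For a fixed binary design `ξ` with `k` active entries and `p ∈ (0,1)^N`,
the partial derivative of `p ↦ log P(ξ | p, k)` with respect to `pⱼ` exists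
and equals `(ξⱼ − πⱼ)(1 + wⱼ)² / wⱼ`. -/
theorem stmt_11 (N : ℕ) (hN : 0 < N) (k : ℕ) (hk1 : 1 ≤ k) (hkN : k ≤ N)
    (ξ : Fin N → Fin 2) (hξ : (∑ i, (ξ i : ℕ)) = k) (j : Fin N)
    (p : Fin N → ℝ) (hp : ∀ i, p i ∈ Set.Ioo (0 : ℝ) 1) :
    HasDerivAt (fun t : ℝ => cbLogPMF k ξ (Function.update p j t))
      (((ξ j : ℕ) - cbInclusion k j p)
        * (1 + cbWeight p j) ^ 2 / cbWeight p j)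
      (p j) :=
  stmt_11_general N k hk1 hkN ξ j p hp
end
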